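/- arXiv:math/0511294 — 3 statements merged into one kernel-verified Lean document; each statement's English description precedes it below -/
import Mathlib

section
/- Let P be a d-dimensional simplicial reflexive polytope with centrally symmetric facets F, −F and vertices of F equal to e_1, …, e_d. Then 2M ⊆ ℤe_1 + ⋯ + ℤe_d ⊆ M, i.e., the sublattice generated by the vertices of F has index dividing 2^d and contains 2M. -/
open Pointwise Matrix

/-- Ambient space `ℝ^d`. -/
abbrev E (d : ℕ) := Fin d → ℝ

/-- A point of the lattice `M ≅ ℤ^d`. -/
def IsLatticePt {d : ℕ} (x : E d) : Prop := ∀ i, ∃ n : ℤ, x i = (n : ℝ)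

/-- The standard pairing between `N_ℝ` and `M_ℝ`. -/
def dot {d : ℕ} (x y : E d) : ℝ := ∑ i, x i * y i

/-- The dual (polar) polytope `P* = {x : ⟨x,y⟩ ≥ -1 ∀ y ∈ P}`. -/
def polarDual {d : ℕ} (P : Set (E d)) : Set (E d) := {x | ∀ y ∈ P, -1 ≤ dot x y}

/-- A lattice polytope: convex hull of finitely many lattice points. -/
def IsLatticePolytope {d : ℕ} (P : Set (E d)) : Prop :=
  ∃ S : Finset (E d), (∀ x ∈ S, IsLatticePt x) ∧ P = convexHull ℝ (S : Set (E d))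

/-- A reflexive polytope: a lattice polytope with `0` in its interior whose polar dual is
again a lattice polytope (i.e. the hull of its lattice points). -/
def IsReflexive {d : ℕ} (P : Set (E d)) : Prop :=
  IsLatticePolytope P ∧ 0 ∈ interior P ∧
    polarDual P = convexHull ℝ {x | x ∈ polarDual P ∧ IsLatticePt x}

/-- A facet: a nonempty exposed face of dimension `d - 1`. -/
def IsFacet {d : ℕ} (P F : Set (E d)) : Prop :=
  IsExposed ℝ P F ∧ F.Nonempty ∧
    Module.finrank ℝ (affineSpan ℝ F).direction = d - 1

/-- Simplicial polytope: every facet is a simplex (hull of `d` affinely independent points). -/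
def IsSimplicial {d : ℕ} (P : Set (E d)) : Prop :=
  ∀ F, IsFacet P F → ∃ v : Fin d → E d,
    AffineIndependent ℝ v ∧ F = convexHull ℝ (Set.range v)

/-- Pseudo-symmetric: some facet `F` has `-F` also a facet. -/
def IsPseudoSymmetric {d : ℕ} (P : Set (E d)) : Prop :=
  ∃ F, IsFacet P F ∧ IsFacet P (-F)

/-- Application of an integer matrix to a point of `ℝ^d`. -/
def applyU {d : ℕ} (U : Matrix (Fin d) (Fin d) ℤ) (x : E d) : E d :=
  (U.map (Int.cast : ℤ → ℝ)) *ᵥ x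

/-- Wirth matrix: block form `[[2·Id_f, 0], [C, Id_{d-f}]]` with `C` a `{0,1}`-matrix
each of whose columns has an odd number of `1`'s. -/
def IsWirth {d : ℕ} (A : Matrix (Fin d) (Fin d) ℤ) : Prop :=
  ∃ f : ℕ, f < d ∧
    (∀ i j : Fin d, (i : ℕ) < f → (j : ℕ) < f → A i j = if i = j then 2 else 0) ∧
    (∀ i j : Fin d, (i : ℕ) < f → f ≤ (j : ℕ) → A i j = 0) ∧
    (∀ i j : Fin d, f ≤ (i : ℕ) → (j : ℕ) < f → A i j = 0 ∨ A i j = 1) ∧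
    (∀ i j : Fin d, f ≤ (i : ℕ) → f ≤ (j : ℕ) → A i j = if i = j then 1 else 0) ∧
    (∀ j : Fin d, (j : ℕ) < f →
      Odd (Finset.univ.filter (fun i : Fin d => f ≤ (i : ℕ) ∧ A i j = 1)).card)

/-
The facet `F = conv(e)` corresponds to the vertex `u` of the dual polytope `P*` with
`⟨u, e_j⟩ = -1` for all `j`. It is the only point of `P*` on the face cut out by all the `e_j`,
and faces of `P* = conv(P* ∩ M)` are spanned by lattice points, so `u` is a lattice point; the
`e_j` are vertices of `P`, hence lattice points too. Let `ε_i` be the dual basis,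
`⟨ε_i, e_j⟩ = δ_ij`. For small `t > 0` the point `u + t ε_i` stays in `P*`, and it lies on the
face of `P*` cut out by the `e_j` with `j ≠ i`; that face is spanned by lattice points and is not
`{u}`, so it contains a lattice point `q` with `⟨q, e_i⟩ ≠ -1`. Since `±e_i ∈ P`,
`⟨q, e_i⟩ ∈ {0, 1}`, so `q - u` is `ε_i` or `2 ε_i`. Hence `2 ε_i` is a lattice point and
`2 x = ∑ ⟨2 ε_i, x⟩ e_i` has integer coefficients for every lattice point `x`.
-/

open Set Module Filter Topology

section StdSimplex

variable {𝕜 ι : Type*} [Fintype ι] [DecidableEq ι]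

theorem eq_single_of_mem_stdSimplex [Semiring 𝕜] [PartialOrder 𝕜] {f : ι → 𝕜}
    (hf : f ∈ stdSimplex 𝕜 ι) {i : ι} (h : ∀ j ≠ i, f j = 0) : f = Pi.single i 1 := by
  ext j
  obtain rfl | hj := eq_or_ne j i
  · simpa [Finset.sum_eq_single j fun k _ hk => h k hk] using hf.2
  · simp [h j hj, hj]

theorem single_mem_extremePoints_stdSimplex [Field 𝕜] [LinearOrder 𝕜] [IsStrictOrderedRing 𝕜]
    (i : ι) : Pi.single i 1 ∈ (stdSimplex 𝕜 ι).extremePoints 𝕜 := by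
  refine mem_extremePoints.2 ⟨single_mem_stdSimplex 𝕜 i,
    fun x₁ hx₁ x₂ hx₂ ⟨a₁, a₂, ha₁, ha₂, _, hx⟩ => ?_⟩
  have hvanish : ∀ j ≠ i, x₁ j = 0 ∧ x₂ j = 0 := fun j hj => by
    have h := congrFun hx j
    simp only [Pi.add_apply, Pi.smul_apply, smul_eq_mul, Pi.single_eq_of_ne hj] at h
    constructor <;> nlinarith [mul_nonneg ha₁.le (hx₁.1 j), mul_nonneg ha₂.le (hx₂.1 j)]
  exact ⟨eq_single_of_mem_stdSimplex hx₁ fun j hj => (hvanish j hj).1,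
    eq_single_of_mem_stdSimplex hx₂ fun j hj => (hvanish j hj).2⟩

end StdSimplex

namespace Module.Basis

variable {𝕜 ι V : Type*} [Field 𝕜] [LinearOrder 𝕜] [IsStrictOrderedRing 𝕜] [Fintype ι]
  [AddCommGroup V] [Module 𝕜 V]

theorem image_equivFun_convexHull_range (b : Basis ι 𝕜 V) :
    b.equivFun '' convexHull 𝕜 (range b) = stdSimplex 𝕜 ι := by
  classical
  rw [← b.equivFun.coe_toLinearMap, LinearMap.image_convexHull, ← range_comp,
    ← convexHull_basis_eq_stdSimplex]
  congr! 2
  ext i j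
  simp

theorem repr_mem_stdSimplex (b : Basis ι 𝕜 V) {y : V} (hy : y ∈ convexHull 𝕜 (range b)) :
    ⇑(b.repr y) ∈ stdSimplex 𝕜 ι :=
  b.image_equivFun_convexHull_range ▸ mem_image_of_mem _ hy

theorem mem_extremePoints_convexHull_range (b : Basis ι 𝕜 V) (i : ι) :
    b i ∈ (convexHull 𝕜 (range b)).extremePoints 𝕜 := by
  classical
  have h := single_mem_extremePoints_stdSimplex (𝕜 := 𝕜) i
  rw [← b.image_equivFun_convexHull_range, ← image_extremePoints] at h
  obtain ⟨x, hx, hxi⟩ := h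
  have : b.equivFun x = b.equivFun (b i) := hxi.trans (by ext j; simp [Pi.single_apply, eq_comm])
  rwa [← b.equivFun.injective this]

end Module.Basis

theorem mem_convexHull_inter_of_le {𝕜 V : Type*} [Field 𝕜] [LinearOrder 𝕜]
    [IsStrictOrderedRing 𝕜] [AddCommGroup V] [Module 𝕜 V] {T : Set V} {f : V →ₗ[𝕜] 𝕜} {c : 𝕜}
    (hT : ∀ p ∈ T, c ≤ f p) {x : V} (hx : x ∈ convexHull 𝕜 T) (hxc : f x = c) :
    x ∈ convexHull 𝕜 (T ∩ {y | f y = c}) := by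
  rw [convexHull_eq] at hx
  obtain ⟨ι, t, w, z, hw₀, hw₁, hzT, rfl⟩ := hx
  have hzero : ∀ i ∈ t, w i * (f (z i) - c) = 0 := by
    refine (Finset.sum_eq_zero_iff_of_nonneg fun i hi =>
      mul_nonneg (hw₀ i hi) (sub_nonneg.2 (hT _ (hzT i hi)))).1 ?_
    rw [Finset.centerMass_eq_of_sum_1 _ _ hw₁, map_sum] at hxc
    simp only [map_smul, smul_eq_mul] at hxc
    simp [mul_sub, Finset.sum_sub_distrib, ← Finset.sum_mul, hw₁, hxc]
  rw [← Finset.centerMass_filter_ne_zero]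
  refine Finset.centerMass_mem_convexHull _ (fun i hi => hw₀ i (Finset.mem_filter.1 hi).1)
    (by rw [Finset.sum_filter_ne_zero, hw₁]; exact one_pos) fun i hi => ?_
  obtain ⟨hit, hwi⟩ := Finset.mem_filter.1 hi
  exact ⟨hzT i hit, sub_eq_zero.1 ((mul_eq_zero.1 (hzero i hit)).resolve_left hwi)⟩

theorem IsExposed.convexHull_range_eq_setOf_sum_coord {ι V : Type*} [Fintype ι]
    [AddCommGroup V] [Module ℝ V] [TopologicalSpace V] {P : Set V} (b : Basis ι ℝ V)
    (hF : IsExposed ℝ P (convexHull ℝ (range b))) (hne : (convexHull ℝ (range b)).Nonempty)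
    (h0 : 0 ∈ P) :
    convexHull ℝ (range b) = {y ∈ P | ∀ z ∈ P, ∑ j, b.coord j z ≤ ∑ j, b.coord j y} := by
  obtain ⟨l, hl⟩ := hF hne
  obtain ⟨y₀, hy₀⟩ := hne
  have hσ : ∀ y ∈ convexHull ℝ (range b), ∑ j, b.coord j y = 1 := fun y hy => by
    simpa using (b.repr_mem_stdSimplex hy).2
  have hmax : ∀ y ∈ convexHull ℝ (range b), y ∈ P ∧ ∀ z ∈ P, l z ≤ l y := fun y hy => by
    rwa [hl] at hy
  have hl_eq : ∀ y, l y = l y₀ * ∑ j, b.coord j y := by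
    have : (l : V →ₗ[ℝ] ℝ) = l y₀ • ∑ j, b.coord j := b.ext fun i => by
      have hi := subset_convexHull ℝ (range b) ⟨i, rfl⟩
      simpa [hσ _ hi] using le_antisymm ((hmax _ hy₀).2 _ (hmax _ hi).1)
        ((hmax _ hi).2 _ (hmax _ hy₀).1)
    simpa using LinearMap.congr_fun this
  have hm : 0 < l y₀ := by
    refine lt_of_le_of_ne (by simpa using (hmax _ hy₀).2 0 h0) fun hm => ?_
    have h0F : (0 : V) ∈ convexHull ℝ (range b) := by
      rw [hl]; exact ⟨h0, fun z _ => by rw [hl_eq z, ← hm, zero_mul, map_zero]⟩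
    simpa using hσ 0 h0F
  rw [hl]
  refine Set.ext fun y => and_congr_right fun _ => forall₂_congr fun z _ => ?_
  rw [hl_eq z, hl_eq y, mul_le_mul_iff_of_pos_left hm]

section Polar

variable {d : ℕ}

theorem dot_eq_dotProduct (x y : E d) : dot x y = x ⬝ᵥ y := rfl

theorem dot_comm (x y : E d) : dot x y = dot y x := dotProduct_comm x y

theorem dot_add_left (x y z : E d) : dot (x + y) z = dot x z + dot y z := add_dotProduct x y z

theorem dot_sub_left (x y z : E d) : dot (x - y) z = dot x z - dot y z := sub_dotProduct x y z

theorem dot_smul_left (t : ℝ) (x z : E d) : dot (t • x) z = t * dot x z := smul_dotProduct t x z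

theorem dot_neg_right (x z : E d) : dot x (-z) = -dot x z := dotProduct_neg x z

def dualVec (φ : E d →ₗ[ℝ] ℝ) : E d := fun k => φ (Pi.single k 1)

@[simp] theorem dot_dualVec (φ : E d →ₗ[ℝ] ℝ) (y : E d) : dot (dualVec φ) y = φ y := by
  conv_rhs => rw [← (Pi.basisFun ℝ (Fin d)).sum_repr y, map_sum]
  simp [dot, dualVec, mul_comm]

theorem eq_of_forall_dot_basis_eq (b : Basis (Fin d) ℝ (E d)) {q q' : E d}
    (h : ∀ j, dot q (b j) = dot q' (b j)) : q = q' := by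
  have hφ := b.ext (f₁ := dotProductBilin ℝ ℝ q) (f₂ := dotProductBilin ℝ ℝ q') h
  funext k
  simpa [dotProduct_single] using LinearMap.congr_fun hφ (Pi.single k 1)

theorem IsLatticePt.exists_dot_eq {x y : E d} (hx : IsLatticePt x) (hy : IsLatticePt y) :
    ∃ n : ℤ, dot x y = n := by
  choose m hm using hx
  choose n hn using hy
  exact ⟨∑ i, m i * n i, by simp [dot, hm, hn]⟩

theorem IsLatticePt.sub {x y : E d} (hx : IsLatticePt x) (hy : IsLatticePt y) :
    IsLatticePt (x - y) := fun i => by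
  obtain ⟨m, hm⟩ := hx i
  obtain ⟨n, hn⟩ := hy i
  exact ⟨m - n, by simp [hm, hn]⟩

theorem IsLatticePt.add {x y : E d} (hx : IsLatticePt x) (hy : IsLatticePt y) :
    IsLatticePt (x + y) := fun i => by
  obtain ⟨m, hm⟩ := hx i
  obtain ⟨n, hn⟩ := hy i
  exact ⟨m + n, by simp [hm, hn]⟩

theorem polarDual_convexHull (S : Set (E d)) : polarDual (convexHull ℝ S) = polarDual S :=
  Set.ext fun x => ⟨fun hx y hy => hx y (subset_convexHull ℝ S hy),
    fun hx => convexHull_min hx (convex_halfSpace_ge (dotProductBilin ℝ ℝ x).isLinear (-1))⟩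

theorem exists_pos_add_smul_mem_polarDual {S : Finset (E d)} {u v : E d}
    (hu : u ∈ polarDual (S : Set (E d))) (hv : ∀ p ∈ S, dot u p = -1 → 0 ≤ dot v p) :
    ∃ t : ℝ, 0 < t ∧ u + t • v ∈ polarDual (convexHull ℝ (S : Set (E d))) := by
  have hevent : ∀ p ∈ S, ∀ᶠ t in 𝓝[>] (0 : ℝ), -1 ≤ dot u p + t * dot v p := by
    intro p hp
    rcases (hu p hp).eq_or_lt with h | h
    · filter_upwards [self_mem_nhdsWithin] with t (ht : (0 : ℝ) < t)
      nlinarith [hv p hp h.symm]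
    · have hcont : Continuous fun t : ℝ => dot u p + t * dot v p := by fun_prop
      filter_upwards [nhdsWithin_le_nhds ((hcont.tendsto' 0 _ (by simp)).eventually_const_lt h)]
        with t ht
      exact ht.le
  obtain ⟨t, ht, ht0⟩ := (((eventually_all_finset S).2 hevent).and self_mem_nhdsWithin).exists
  refine ⟨t, ht0, polarDual_convexHull (S : Set (E d)) ▸ fun p hp => ?_⟩
  rw [dot_add_left, dot_smul_left]
  exact ht p hp

theorem mem_convexHull_latticePts_of_dot_eq_neg_one {P : Set (E d)} {e : Fin d → E d}
    (hdual : polarDual P = convexHull ℝ {x | x ∈ polarDual P ∧ IsLatticePt x})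
    (he : ∀ j, e j ∈ P) (s : Finset (Fin d)) {w : E d} (hw : w ∈ polarDual P)
    (hws : ∀ j ∈ s, dot w (e j) = -1) :
    w ∈ convexHull ℝ {q | q ∈ polarDual P ∧ IsLatticePt q ∧ ∀ j ∈ s, dot q (e j) = -1} := by
  let f : E d →ₗ[ℝ] ℝ := dotProductBilin ℝ ℝ (∑ j ∈ s, e j)
  have hf (q : E d) : f q = ∑ j ∈ s, dot q (e j) := by
    simp [f, dot_comm q, dot_eq_dotProduct]
  have hface := mem_convexHull_inter_of_le (f := f) (c := ∑ j ∈ s, (-1 : ℝ))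
    (fun q hq => (hf q).symm ▸ Finset.sum_le_sum fun j _ => hq.1 (e j) (he j))
    (hdual ▸ hw) ((hf w).trans (Finset.sum_congr rfl hws))
  refine convexHull_mono ?_ hface
  rintro q ⟨⟨hqP, hq⟩, hqc : f q = _⟩
  rw [hf, eq_comm, Finset.sum_eq_sum_iff_of_le fun j _ => hqP (e j) (he j)] at hqc
  exact ⟨hqP, hq, fun j hj => (hqc j hj).symm⟩

variable (b : Basis (Fin d) ℝ (E d))

/-- The vertex `u` of `P*` dual to the facet `conv (range b)`. -/
noncomputable def facetNormal : E d := dualVec (-∑ j, b.coord j)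

theorem dot_facetNormal (y : E d) : dot (facetNormal b) y = -∑ j, b.coord j y := by
  simp [facetNormal]

theorem dot_facetNormal_basis (i : Fin d) : dot (facetNormal b) (b i) = -1 := by
  simp [dot_facetNormal, Finsupp.single_apply]

variable {b} {P : Set (E d)}

theorem IsExposed.facetNormal_mem_polarDual (hF : IsExposed ℝ P (convexHull ℝ (range b)))
    (hne : (convexHull ℝ (range b)).Nonempty) (h0 : 0 ∈ P) : facetNormal b ∈ polarDual P := by
  obtain ⟨y₀, hy₀⟩ := hne
  intro y hy
  have := (hF.convexHull_range_eq_setOf_sum_coord b ⟨y₀, hy₀⟩ h0 ▸ hy₀).2 y hy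
  rw [dot_facetNormal, neg_le_neg_iff]
  simpa [(b.repr_mem_stdSimplex hy₀).2] using this

theorem IsExposed.mem_of_dot_facetNormal_eq_neg_one
    (hF : IsExposed ℝ P (convexHull ℝ (range b))) (hne : (convexHull ℝ (range b)).Nonempty)
    (h0 : 0 ∈ P) {y : E d} (hy : y ∈ P) (h : dot (facetNormal b) y = -1) :
    y ∈ convexHull ℝ (range b) := by
  rw [hF.convexHull_range_eq_setOf_sum_coord b hne h0]
  refine ⟨hy, fun z hz => ?_⟩
  have := hF.facetNormal_mem_polarDual hne h0 z hz
  rw [dot_facetNormal] at this h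
  linarith

theorem isLatticePt_facetNormal
    (hdual : polarDual P = convexHull ℝ {x | x ∈ polarDual P ∧ IsLatticePt x})
    (hbP : ∀ j, b j ∈ P) (hu : facetNormal b ∈ polarDual P) : IsLatticePt (facetNormal b) := by
  obtain ⟨q, hqP, hq_lat, hq⟩ := convexHull_nonempty_iff.1
    ⟨_, mem_convexHull_latticePts_of_dot_eq_neg_one hdual hbP Finset.univ hu
      fun j _ => dot_facetNormal_basis b j⟩
  have : q = facetNormal b := eq_of_forall_dot_basis_eq b fun j => by
    rw [hq j (Finset.mem_univ j), dot_facetNormal_basis]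
  rwa [← this]

theorem exists_latticePt_dot_basis_ne_neg_one {S : Finset (E d)}
    (hS : P = convexHull ℝ (S : Set (E d)))
    (hdual : polarDual P = convexHull ℝ {x | x ∈ polarDual P ∧ IsLatticePt x})
    (hbP : ∀ j, b j ∈ P) (hu : facetNormal b ∈ polarDual P)
    (hfacet : ∀ y ∈ P, dot (facetNormal b) y = -1 → y ∈ convexHull ℝ (range b)) (i : Fin d) :
    ∃ q ∈ polarDual P, IsLatticePt q ∧ (∀ j ≠ i, dot q (b j) = -1) ∧ dot q (b i) ≠ -1 := by
  have hSP : (S : Set (E d)) ⊆ P := hS ▸ subset_convexHull ℝ _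
  obtain ⟨t, ht, hw⟩ := exists_pos_add_smul_mem_polarDual (v := dualVec (b.coord i))
    (fun p hp => hu p (hSP hp))
    fun p hp hpu => by simpa using (b.repr_mem_stdSimplex (hfacet p (hSP hp) hpu)).1 i
  rw [← hS] at hw
  have hw_dot (j : Fin d) : dot (facetNormal b + t • dualVec (b.coord i)) (b j) =
      -1 + if j = i then t else 0 := by
    simp [dot_add_left, dot_smul_left, dot_facetNormal_basis, Finsupp.single_apply, eq_comm]
  have hface := mem_convexHull_latticePts_of_dot_eq_neg_one hdual hbP (Finset.univ.erase i) hw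
    fun j hj => by simp [hw_dot, Finset.ne_of_mem_erase hj]
  by_contra! hnone
  have hsub : {q | q ∈ polarDual P ∧ IsLatticePt q ∧
      ∀ j ∈ Finset.univ.erase i, dot q (b j) = -1} ⊆ {facetNormal b} := by
    rintro q ⟨hqP, hq_lat, hq⟩
    refine eq_of_forall_dot_basis_eq b fun j => ?_
    rw [dot_facetNormal_basis]
    obtain rfl | hj := eq_or_ne j i
    · exact hnone q hqP hq_lat fun k hk => hq k (Finset.mem_erase.2 ⟨hk, Finset.mem_univ k⟩)
    · exact hq j (Finset.mem_erase.2 ⟨hj, Finset.mem_univ j⟩)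
  have hwu := convexHull_mono hsub hface
  rw [convexHull_singleton, mem_singleton_iff] at hwu
  have := hw_dot i
  rw [hwu, dot_facetNormal_basis, if_pos rfl] at this
  linarith

theorem exists_latticePt_dot_eq_two_mul_coord {S : Finset (E d)}
    (hS : P = convexHull ℝ (S : Set (E d)))
    (hdual : polarDual P = convexHull ℝ {x | x ∈ polarDual P ∧ IsLatticePt x})
    (hbP : ∀ j, b j ∈ P) (hnegP : ∀ j, -b j ∈ P) (hb_lat : ∀ j, IsLatticePt (b j))
    (hu : facetNormal b ∈ polarDual P)
    (hfacet : ∀ y ∈ P, dot (facetNormal b) y = -1 → y ∈ convexHull ℝ (range b)) (i : Fin d) :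
    ∃ g, IsLatticePt g ∧ ∀ y, dot g y = 2 * b.coord i y := by
  obtain ⟨q, hqP, hq_lat, hq, hqi⟩ :=
    exists_latticePt_dot_basis_ne_neg_one hS hdual hbP hu hfacet i
  obtain ⟨k, hk⟩ := hq_lat.exists_dot_eq (hb_lat i)
  have hk01 : k = 0 ∨ k = 1 := by
    have h₁ : (-1 : ℝ) ≤ k := hk ▸ hqP _ (hbP i)
    have h₂ : (k : ℝ) ≤ 1 := by
      have := hqP _ (hnegP i)
      rw [dot_neg_right, hk] at this
      linarith
    have h₃ : (k : ℝ) ≠ -1 := hk ▸ hqi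
    have : -1 ≤ k ∧ k ≤ 1 ∧ k ≠ -1 :=
      ⟨by exact_mod_cast h₁, by exact_mod_cast h₂, by exact_mod_cast h₃⟩
    omega
  set r := q - facetNormal b
  have hr_lat : IsLatticePt r := hq_lat.sub (isLatticePt_facetNormal hdual hbP hu)
  have hr : ∀ y, dot r y = (k + 1) * b.coord i y := by
    have : r = ((k : ℝ) + 1) • dualVec (b.coord i) := eq_of_forall_dot_basis_eq b fun j => by
      rw [dot_sub_left, dot_facetNormal_basis, dot_smul_left, dot_dualVec]
      obtain rfl | hj := eq_or_ne j i
      · simp [hk]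
      · simp [hq j hj, hj.symm]
    simp [this, dot_smul_left]
  rcases hk01 with rfl | rfl
  · refine ⟨r + r, hr_lat.add hr_lat, fun y => ?_⟩
    rw [dot_add_left, hr]
    ring
  · refine ⟨r, hr_lat, fun y => ?_⟩
    rw [hr]
    norm_num

end Polar

theorem two_M_sub_vertex_lattice_general (d : ℕ) (P F : Set (E d)) (e : Fin d → E d)
    (hP : IsReflexive P)
    (hF : IsFacet P F) (hFneg : IsFacet P (-F))
    (he : LinearIndependent ℝ e) (hFe : F = convexHull ℝ (Set.range e)) :
    (∀ i, IsLatticePt (e i)) ∧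
    ∀ x : E d, IsLatticePt x → ∃ c : Fin d → ℤ,
      (2 : ℝ) • x = ∑ i, (c i : ℝ) • e i := by
  obtain ⟨⟨S, hS_lat, hS⟩, h0, hdual⟩ := hP
  obtain ⟨b, rfl⟩ : ∃ b : Basis (Fin d) ℝ (E d), ⇑b = e :=
    ⟨.mk he (he.span_eq_top_of_card_eq_finrank' (by simp)).ge, Basis.coe_mk _ _⟩
  subst hFe
  have hbF (j : Fin d) : b j ∈ convexHull ℝ (range b) := subset_convexHull ℝ _ ⟨j, rfl⟩
  have hb_lat (j : Fin d) : IsLatticePt (b j) := hS_lat _ <| extremePoints_convexHull_subset <|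
    hS ▸ hF.1.isExtreme.extremePoints_subset_extremePoints (b.mem_extremePoints_convexHull_range j)
  have h0P := interior_subset h0
  choose g hg_lat hg using exists_latticePt_dot_eq_two_mul_coord hS hdual
    (fun j => hF.1.subset (hbF j)) (fun j => hFneg.1.subset (by simpa using hbF j)) hb_lat
    (hF.1.facetNormal_mem_polarDual hF.2.1 h0P)
    (fun _ => hF.1.mem_of_dot_facetNormal_eq_neg_one hF.2.1 h0P)
  refine ⟨hb_lat, fun x hx => ?_⟩
  choose c hc using fun i => (hg_lat i).exists_dot_eq hx
  refine ⟨c, ?_⟩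
  conv_lhs => rw [← b.sum_repr x]
  rw [Finset.smul_sum]
  refine Finset.sum_congr rfl fun i _ => ?_
  rw [smul_smul, ← hc, hg, Basis.coord_apply]

theorem two_M_sub_vertex_lattice (d : ℕ) (P F : Set (E d)) (e : Fin d → E d)
    (hP : IsReflexive P) (hsimp : IsSimplicial P)
    (hF : IsFacet P F) (hFneg : IsFacet P (-F))
    (he : LinearIndependent ℝ e) (hFe : F = convexHull ℝ (Set.range e)) :
    (∀ i, IsLatticePt (e i)) ∧
    ∀ x : E d, IsLatticePt x → ∃ c : Fin d → ℤ,
      (2 : ℝ) • x = ∑ i, (c i : ℝ) • e i :=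
  two_M_sub_vertex_lattice_general d P F e hP hF hFneg he hFe
end

section
/- Every Wirth matrix A ∈ Mat_d(ℕ) defines a reflexive centrally symmetric crosspolytope: the convex hull of the columns of A and their negatives is a d-dimensional reflexive polytope that is a centrally symmetric crosspolytope. -/
open Pointwise Matrix

namespace WirthAux

variable {d : ℕ}

/-- the inverse matrix -/
noncomputable def Bmat (d f : ℕ) (A : Matrix (Fin d) (Fin d) ℤ) : Matrix (Fin d) (Fin d) ℝ :=
  Matrix.of fun i j =>
    if (i : ℕ) < f then (if i = j then 1/2 else 0)
    else if (j : ℕ) < f then -(A i j : ℝ)/2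
    else (if i = j then 1 else 0)

variable {f : ℕ} {A : Matrix (Fin d) (Fin d) ℤ}

lemma BA_eq_one
    (h1 : ∀ i j : Fin d, (i : ℕ) < f → (j : ℕ) < f → A i j = if i = j then 2 else 0)
    (h2 : ∀ i j : Fin d, (i : ℕ) < f → f ≤ (j : ℕ) → A i j = 0)
    (h4 : ∀ i j : Fin d, f ≤ (i : ℕ) → f ≤ (j : ℕ) → A i j = if i = j then 1 else 0) :
    Bmat d f A * A.map (Int.cast : ℤ → ℝ) = 1 := by
  ext i j
  rw [Matrix.mul_apply, Matrix.one_apply]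
  by_cases hi : (i : ℕ) < f
  · have key : ∀ k : Fin d, Bmat d f A i k * (A.map (Int.cast : ℤ → ℝ)) k j
        = if i = k then (A k j : ℝ)/2 else 0 := by
      intro k
      simp only [Bmat, Matrix.of_apply, Matrix.map_apply, if_pos hi]
      by_cases hik : i = k <;> simp [hik] <;> ring
    rw [Finset.sum_congr rfl fun k _ => key k, Finset.sum_ite_eq]
    simp only [Finset.mem_univ, if_pos]
    by_cases hj : (j : ℕ) < f
    · rw [h1 i j hi hj]
      by_cases hij : i = j <;> simp [hij]
    · rw [h2 i j hi (le_of_not_gt hj)]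
      have : i ≠ j := fun h => hj (h ▸ hi)
      simp [this]
  · by_cases hj : (j : ℕ) < f
    · have hij : i ≠ j := fun h => hi (h ▸ hj)
      have key : ∀ k : Fin d, Bmat d f A i k * (A.map (Int.cast : ℤ → ℝ)) k j
          = (if j = k then -(A i j : ℝ) else 0) + (if i = k then (A i j : ℝ) else 0) := by
        intro k
        by_cases hk : (k : ℕ) < f
        · have hik : i ≠ k := fun h => hi (h ▸ hk)
          have hAkj : ((A.map (Int.cast : ℤ → ℝ)) k j) = if j = k then 2 else 0 := by
            rw [Matrix.map_apply, h1 k j hk hj]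
            by_cases h : k = j
            · simp [h]
            · simp [h, Ne.symm h]
          rw [hAkj]
          simp only [Bmat, Matrix.of_apply, if_neg hi, if_pos hk, if_neg hik]
          by_cases hjk : j = k
          · subst hjk; simp
          · simp [hjk]
        · have hjk : j ≠ k := fun h => hk (h ▸ hj)
          simp only [Bmat, Matrix.of_apply, if_neg hi, if_neg hk, Matrix.map_apply,
            if_neg hjk]
          by_cases hik : i = k
          · subst hik; simp
          · simp [hik]
      rw [Finset.sum_congr rfl fun k _ => key k, Finset.sum_add_distrib,
        Finset.sum_ite_eq, Finset.sum_ite_eq]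
      simp [hij]
    · have hjf : f ≤ (j : ℕ) := le_of_not_gt hj
      have hif : f ≤ (i : ℕ) := le_of_not_gt hi
      have key : ∀ k : Fin d, Bmat d f A i k * (A.map (Int.cast : ℤ → ℝ)) k j
          = if i = k then (if i = j then (1:ℝ) else 0) else 0 := by
        intro k
        by_cases hk : (k : ℕ) < f
        · have hik : i ≠ k := fun h => hi (h ▸ hk)
          have : (A.map (Int.cast : ℤ → ℝ)) k j = 0 := by
            rw [Matrix.map_apply, h2 k j hk hjf]; simp
          rw [this, if_neg hik, mul_zero]
        · have hAkj : ((A.map (Int.cast : ℤ → ℝ)) k j) = if k = j then 1 else 0 := by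
            rw [Matrix.map_apply, h4 k j (le_of_not_gt hk) hjf]
            by_cases h : k = j <;> simp [h]
          rw [hAkj]
          simp only [Bmat, Matrix.of_apply, if_neg hi, if_neg hk]
          by_cases hik : i = k
          · subst hik; simp
          · simp [hik]
      rw [Finset.sum_congr rfl fun k _ => key k, Finset.sum_ite_eq]
      simp


lemma AB_eq_one
    (h1 : ∀ i j : Fin d, (i : ℕ) < f → (j : ℕ) < f → A i j = if i = j then 2 else 0)
    (h2 : ∀ i j : Fin d, (i : ℕ) < f → f ≤ (j : ℕ) → A i j = 0)
    (h4 : ∀ i j : Fin d, f ≤ (i : ℕ) → f ≤ (j : ℕ) → A i j = if i = j then 1 else 0) :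
    A.map (Int.cast : ℤ → ℝ) * Bmat d f A = 1 :=
  mul_eq_one_comm.mpr (BA_eq_one h1 h2 h4)

lemma mulVec_eq_sum (M : Matrix (Fin d) (Fin d) ℝ) (y : E d) :
    M *ᵥ y = ∑ j, y j • (fun i => M i j : E d) := by
  funext i
  simp [Matrix.mulVec, dotProduct, Finset.sum_apply, mul_comm]

lemma convex_polarDual (P : Set (E d)) : Convex ℝ (polarDual P) := by
  intro x hx y hy a b ha hb hab
  intro z hz
  have h1 := hx z hz
  have h2 := hy z hz
  have hdd : dot (a • x + b • y) z = a * dot x z + b * dot y z := by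
    simp only [dot, Pi.add_apply, Pi.smul_apply, smul_eq_mul, add_mul,
      Finset.sum_add_distrib, Finset.mul_sum, mul_assoc]
  show -1 ≤ dot (a • x + b • y) z
  rw [hdd]
  nlinarith

lemma isLinearMap_dot (x : E d) : IsLinearMap ℝ (dot x) := by
  constructor
  · intro y z; simp [dot, mul_add, Finset.sum_add_distrib]
  · intro c y
    simp only [dot, Pi.smul_apply, smul_eq_mul, Finset.mul_sum]
    exact Finset.sum_congr rfl fun i _ => by ring

lemma polarDual_convexHull (S : Set (E d)) : polarDual (convexHull ℝ S) = polarDual S := by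
  apply Set.Subset.antisymm
  · intro x hx y hy; exact hx y (subset_convexHull ℝ S hy)
  · intro x hx y hy
    exact convexHull_min hx (convex_halfSpace_ge (isLinearMap_dot x) (-1)) hy

lemma lattice_vertex
    (h3 : ∀ i j : Fin d, f ≤ (i : ℕ) → (j : ℕ) < f → A i j = 0 ∨ A i j = 1)
    (h5 : ∀ j : Fin d, (j : ℕ) < f →
      Odd (Finset.univ.filter (fun i : Fin d => f ≤ (i : ℕ) ∧ A i j = 1)).card)
    (u : E d) (hu : ∀ k, u k = -1 ∨ u k = 1) :
    IsLatticePt ((Bmat d f A)ᵀ *ᵥ u) := by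
  intro i
  have hBv : ((Bmat d f A)ᵀ *ᵥ u) i = ∑ k, Bmat d f A k i * u k := by
    simp [Matrix.mulVec, dotProduct, Matrix.transpose_apply]
  set ε : Fin d → ℤ := fun k => if u k = 1 then 1 else -1 with hεdef
  have hε : ∀ k, ((ε k : ℤ) : ℝ) = u k := by
    intro k
    rcases hu k with h | h
    · simp only [hεdef]
      rw [if_neg (by rw [h]; norm_num), h]
      norm_num
    · simp [hεdef, h]
  by_cases hi : (i : ℕ) < f
  · set F := Finset.univ.filter (fun k : Fin d => f ≤ (k : ℕ) ∧ A k i = 1) with hF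
    have hodd := h5 i hi
    have key : ∀ k : Fin d, Bmat d f A k i * u k
        = (if i = k then u i / 2 else 0) + (if k ∈ F then -(u k)/2 else 0) := by
      intro k
      by_cases hk : (k : ℕ) < f
      · have hkF : k ∉ F := by simp [hF, Finset.mem_filter]; intro h; omega
        simp only [Bmat, Matrix.of_apply, if_pos hk, if_neg hkF]
        by_cases hik : k = i
        · subst hik; simp [eq_comm]; ring
        · rw [if_neg hik, if_neg (fun h => hik h.symm)]; ring
      · have hik : i ≠ k := fun h => hk (h ▸ hi)
        rw [if_neg hik, zero_add]
        simp only [Bmat, Matrix.of_apply, if_neg hk, if_pos hi]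
        rcases h3 k i (le_of_not_gt hk) hi with h0 | h1'
        · have hkF : k ∉ F := by simp [hF, Finset.mem_filter, h0]
          rw [if_neg hkF, h0]; simp
        · have hkF : k ∈ F := by simp [hF, Finset.mem_filter, h1', le_of_not_gt hk]
          rw [if_pos hkF, h1']; push_cast; ring
    have hsum : ((Bmat d f A)ᵀ *ᵥ u) i = u i / 2 - (∑ k ∈ F, u k) / 2 := by
      rw [hBv, Finset.sum_congr rfl fun k _ => key k, Finset.sum_add_distrib,
        Finset.sum_ite_eq, Finset.sum_ite_mem, Finset.univ_inter]
      simp only [Finset.mem_univ, if_pos]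
      rw [← Finset.sum_div, Finset.sum_neg_distrib]
      ring
    set z : ℤ := ε i - ∑ k ∈ F, ε k with hz
    have hz2 : (2 : ℤ) ∣ z := by
      have hcast : ((z : ℤ) : ZMod 2) = 0 := by
        have hε2 : ∀ k, ((ε k : ℤ) : ZMod 2) = 1 := by
          intro k
          by_cases h : u k = 1 <;> simp [hεdef, h] <;> decide
        have hc : ((F.card : ℕ) : ZMod 2) = 1 := by
          obtain ⟨m, hm⟩ := hodd
          rw [hm]; push_cast
          have : (2 : ZMod 2) = 0 := by decide
          rw [this]; ring
        rw [hz]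
        push_cast
        rw [Finset.sum_congr rfl fun k _ => hε2 k, hε2 i, Finset.sum_const, nsmul_eq_mul,
          mul_one, hc]
        ring
      exact (ZMod.intCast_zmod_eq_zero_iff_dvd z 2).mp hcast
    obtain ⟨n, hn⟩ := hz2
    refine ⟨n, ?_⟩
    have hsumε : (∑ k ∈ F, u k) = ((∑ k ∈ F, ε k : ℤ) : ℝ) := by
      push_cast
      exact Finset.sum_congr rfl fun k _ => (hε k).symm
    rw [hsum, hsumε, ← hε i]
    have heq : ((ε i : ℤ) : ℝ) / 2 - ((∑ k ∈ F, ε k : ℤ) : ℝ) / 2 = ((z : ℤ) : ℝ) / 2 := by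
      rw [hz]; push_cast; ring
    rw [heq, hn]
    push_cast; ring
  · have key : ∀ k : Fin d, Bmat d f A k i * u k = if i = k then u i else 0 := by
      intro k
      by_cases hk : (k : ℕ) < f
      · have hik : i ≠ k := fun h => (h ▸ hi) hk
        simp only [Bmat, Matrix.of_apply, if_pos hk,
          if_neg (fun h : k = i => hik h.symm), if_neg hik]
        ring
      · simp only [Bmat, Matrix.of_apply, if_neg hk, if_neg hi]
        by_cases hik : k = i
        · subst hik; simp
        · rw [if_neg hik, if_neg fun h => hik h.symm]; ring
    refine ⟨ε i, ?_⟩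
    rw [hBv, Finset.sum_congr rfl fun k _ => key k, Finset.sum_ite_eq]
    simp [hε i]

end WirthAux

theorem wirth_matrix_gives_reflexive_crosspolytope (d : ℕ)
    (A : Matrix (Fin d) (Fin d) ℤ) (hA : IsWirth A) :
    LinearIndependent ℝ (fun j : Fin d => (fun i => (A i j : ℝ) : E d)) ∧
    IsReflexive (convexHull ℝ
      (Set.range (fun j : Fin d => (fun i => (A i j : ℝ) : E d)) ∪
        Set.range (fun j : Fin d => (fun i => -(A i j : ℝ) : E d)))) := by
  classical
  obtain ⟨f, hfd, h1, h2, h3, h4, h5⟩ := hA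
  have hBA : WirthAux.Bmat d f A * A.map (Int.cast : ℤ → ℝ) = 1 := WirthAux.BA_eq_one h1 h2 h4
  have hAB : A.map (Int.cast : ℤ → ℝ) * WirthAux.Bmat d f A = 1 := WirthAux.AB_eq_one h1 h2 h4
  set A' : Matrix (Fin d) (Fin d) ℝ := A.map (Int.cast : ℤ → ℝ) with hA'
  set B : Matrix (Fin d) (Fin d) ℝ := WirthAux.Bmat d f A with hB
  have hBtAt : Bᵀ * A'ᵀ = 1 := by rw [← Matrix.transpose_mul, hAB, Matrix.transpose_one]
  have hAtBt : A'ᵀ * Bᵀ = 1 := by rw [← Matrix.transpose_mul, hBA, Matrix.transpose_one]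
  set v : Fin d → E d := fun j : Fin d => (fun i => (A i j : ℝ) : E d) with hv
  set w : Fin d → E d := fun j : Fin d => (fun i => -(A i j : ℝ) : E d) with hw
  have hmv : ∀ y : E d, A' *ᵥ y = ∑ j, y j • v j := by
    intro y
    rw [WirthAux.mulVec_eq_sum]
    rfl
  set S : Set (E d) := Set.range v ∪ Set.range w with hS
  set P : Set (E d) := convexHull ℝ S with hP
  have hvP : ∀ j, v j ∈ P := fun j => subset_convexHull ℝ S (Or.inl ⟨j, rfl⟩)
  have hwP : ∀ j, w j ∈ P := fun j => subset_convexHull ℝ S (Or.inr ⟨j, rfl⟩)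
  have hd0 : 0 < d := lt_of_le_of_lt (Nat.zero_le f) hfd
  have h0P : (0 : E d) ∈ P := by
    let j0 : Fin d := ⟨0, hd0⟩
    have h0 : (0 : E d) = (1/2 : ℝ) • v j0 + (1/2 : ℝ) • w j0 := by
      funext i; simp [hv, hw]
    rw [h0]
    exact (convex_convexHull ℝ S) (hvP j0) (hwP j0) (by norm_num) (by norm_num) (by norm_num)
  constructor
  · -- linear independence
    rw [Fintype.linearIndependent_iff]
    intro g hg
    have hg' : A' *ᵥ g = 0 := by rw [hmv]; exact hg
    have hgz : g = 0 := by
      have hgg : g = B *ᵥ (A' *ᵥ g) := by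
        rw [Matrix.mulVec_mulVec, hBA, Matrix.one_mulVec]
      rw [hg', Matrix.mulVec_zero] at hgg
      exact hgg
    intro i; rw [hgz]; rfl
  refine ⟨⟨Finset.univ.image v ∪ Finset.univ.image w, ?_, ?_⟩, ?_, ?_⟩
  · -- lattice points
    intro x hx
    simp only [Finset.mem_union, Finset.mem_image, Finset.mem_univ, true_and] at hx
    rcases hx with ⟨j, rfl⟩ | ⟨j, rfl⟩
    · exact fun i => ⟨A i j, rfl⟩
    · exact fun i => ⟨-(A i j), by simp [hw]⟩
  · -- P is the hull of that finset
    rw [hP, hS]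
    congr 1
    simp [Finset.coe_union, Finset.coe_image, Set.image_univ]
  · -- 0 in interior
    set M : ℝ := ∑ j, ∑ k, |B j k| with hM
    have hM0 : 0 ≤ M := Finset.sum_nonneg fun j _ => Finset.sum_nonneg fun k _ => abs_nonneg _
    rw [mem_interior]
    refine ⟨Metric.ball 0 (1/(M+1)), ?_, Metric.isOpen_ball, Metric.mem_ball_self (by positivity)⟩
    intro x hx
    have hxn : ‖x‖ < 1/(M+1) := by simpa using mem_ball_zero_iff.mp hx
    set c : E d := B *ᵥ x with hc
    have hxc : x = ∑ j, c j • v j := by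
      rw [← hmv, hc, Matrix.mulVec_mulVec, hAB, Matrix.one_mulVec]
    have hcb : ∀ j, |c j| ≤ (∑ k, |B j k|) * ‖x‖ := by
      intro j
      have hcj : c j = ∑ k, B j k * x k := by
        simp [hc, Matrix.mulVec, dotProduct]
      rw [hcj]
      calc |∑ k, B j k * x k| ≤ ∑ k, |B j k * x k| := Finset.abs_sum_le_sum_abs _ _
        _ ≤ ∑ k, |B j k| * ‖x‖ := Finset.sum_le_sum fun k _ => by
            rw [abs_mul]
            exact mul_le_mul_of_nonneg_left
              (by simpa [Real.norm_eq_abs] using norm_le_pi_norm x k) (abs_nonneg _)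
        _ = (∑ k, |B j k|) * ‖x‖ := (Finset.sum_mul _ _ _).symm
    have hsM : ∑ j, |c j| ≤ M * ‖x‖ := by
      rw [hM, Finset.sum_mul]
      exact Finset.sum_le_sum fun j _ => hcb j
    have hslt : ∑ j, |c j| < 1 := by
      have h1' : ‖x‖ * (M+1) < 1 := by
        rw [lt_div_iff₀ (by positivity)] at hxn; exact hxn
      nlinarith [norm_nonneg x]
    set u : Fin d → E d := fun j => if 0 ≤ c j then v j else w j with hu
    have huS : ∀ j, u j ∈ S := by
      intro j; by_cases h : 0 ≤ c j
      · simp only [hu, if_pos h]; exact Or.inl ⟨j, rfl⟩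
      · simp only [hu, if_neg h]; exact Or.inr ⟨j, rfl⟩
    have hcu : ∀ j, c j • v j = |c j| • u j := by
      intro j; by_cases h : 0 ≤ c j
      · simp only [hu, if_pos h, abs_of_nonneg h]
      · simp only [hu, if_neg h, abs_of_neg (lt_of_not_ge h)]
        funext i; simp [hv, hw]
    have hxcomb : x = ∑ j, |c j| • u j := by
      rw [hxc]; exact Finset.sum_congr rfl fun j _ => hcu j
    have hmem := (convex_convexHull ℝ S).sum_mem
        (t := Finset.insertNone Finset.univ)
        (w := fun o : Option (Fin d) => o.elim (1 - ∑ j, |c j|) (fun j => |c j|))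
        (z := fun o : Option (Fin d) => o.elim 0 u)
        (fun o _ => by
          cases o with
          | none => simp only [Option.elim]; linarith
          | some j => exact abs_nonneg _)
        (by rw [Finset.sum_insertNone]; simp only [Option.elim]; ring)
        (fun o _ => by
          cases o with
          | none => exact h0P
          | some j => exact subset_convexHull ℝ S (huS j))
    rw [Finset.sum_insertNone] at hmem
    simp only [Option.elim, smul_zero, zero_add] at hmem
    rw [hP, hxcomb]
    exact hmem
  · -- polar dual equality
    set cube : Set (E d) := Set.pi Set.univ (fun _ : Fin d => Set.Icc (-1:ℝ) 1) with hcube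
    set V : Set (E d) := Set.pi Set.univ (fun _ : Fin d => ({-1,1} : Set ℝ)) with hV
    have hcubeV : convexHull ℝ V = cube := by
      rw [hV, convexHull_pi, hcube]
      simp only [convexHull_pair, segment_eq_Icc (show (-1:ℝ) ≤ 1 by norm_num)]
    have hdotv : ∀ (x : E d) (j : Fin d), dot x (v j) = (A'ᵀ *ᵥ x) j := by
      intro x j
      simp [dot, hv, hA', Matrix.mulVec, dotProduct, Matrix.transpose_apply,
        Matrix.map_apply, mul_comm]
    have hdotw : ∀ (x : E d) (j : Fin d), dot x (w j) = -((A'ᵀ *ᵥ x) j) := by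
      intro x j
      rw [← hdotv]
      simp [dot, hv, hw, ← Finset.sum_neg_distrib]
    have hpolar : polarDual P = {x : E d | A'ᵀ *ᵥ x ∈ cube} := by
      rw [hP, WirthAux.polarDual_convexHull]
      ext x
      simp only [polarDual, Set.mem_setOf_eq, hS, Set.mem_union, Set.mem_range, hcube,
        Set.mem_pi, Set.mem_univ, Set.mem_Icc, true_implies]
      constructor
      · intro h j
        constructor
        · rw [← hdotv]; exact h (v j) (Or.inl ⟨j, rfl⟩)
        · have hwj := h (w j) (Or.inr ⟨j, rfl⟩); rw [hdotw] at hwj; linarith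
      · intro h y hy
        rcases hy with ⟨j, rfl⟩ | ⟨j, rfl⟩
        · rw [hdotv]; exact (h j).1
        · rw [hdotw]; linarith [(h j).2]
    have himg : {x : E d | A'ᵀ *ᵥ x ∈ cube} = (fun u : E d => Bᵀ *ᵥ u) '' cube := by
      ext x
      constructor
      · intro hx
        exact ⟨A'ᵀ *ᵥ x, hx, by show Bᵀ *ᵥ (A'ᵀ *ᵥ x) = x; rw [Matrix.mulVec_mulVec, hBtAt, Matrix.one_mulVec]⟩
      · rintro ⟨u, hu', rfl⟩
        show A'ᵀ *ᵥ (Bᵀ *ᵥ u) ∈ cube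
        rw [Matrix.mulVec_mulVec, hAtBt, Matrix.one_mulVec]; exact hu'
    have himg2 : (fun u : E d => Bᵀ *ᵥ u) '' cube
        = convexHull ℝ ((fun u : E d => Bᵀ *ᵥ u) '' V) := by
      rw [← hcubeV]
      have hcoe : (fun u : E d => Bᵀ *ᵥ u) = ⇑((Bᵀ).mulVecLin) := by
        funext u; rfl
      rw [hcoe]
      exact (Bᵀ).mulVecLin.image_convexHull V
    have hVlat : (fun u : E d => Bᵀ *ᵥ u) '' V ⊆ {x | x ∈ polarDual P ∧ IsLatticePt x} := by
      rintro _ ⟨u, hu', rfl⟩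
      have hu2 : ∀ k, u k = -1 ∨ u k = 1 := by
        intro k
        have := hu' k (Set.mem_univ k)
        simpa [hV] using this
      constructor
      · rw [hpolar, himg]
        refine ⟨u, ?_, rfl⟩
        intro i _
        rcases hu2 i with h | h <;> rw [h] <;> constructor <;> norm_num
      · exact WirthAux.lattice_vertex h3 h5 u hu2
    apply Set.Subset.antisymm
    · calc polarDual P = convexHull ℝ ((fun u : E d => Bᵀ *ᵥ u) '' V) := by
            rw [hpolar, himg, himg2]
        _ ⊆ convexHull ℝ {x | x ∈ polarDual P ∧ IsLatticePt x} := convexHull_mono hVlat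
    · exact convexHull_min (fun x hx => hx.1) (WirthAux.convex_polarDual P)
end

section
/- Let P be a reflexive cs-crosspolytope conv(±e_1, …, ±e_d) given by a Wirth matrix A with columns e_1, …, e_d. Then any two facets of P are isomorphic as lattice polytopes: for any sign vector (ε_1, …, ε_d) ∈ {±1}^d there exists U ∈ GL_d(ℤ) with U·(ε_1 e_1, …, ε_d e_d) = (e_1, …, e_d) up to the stated column scaling, i.e., the facet conv(ε_1 e_1, …, ε_d e_d) is unimodularly equivalent to conv(e_1, …, e_d). -/
open Pointwise Matrix

/-!
Over `ℚ` the required matrix is `U = A D A⁻¹` with `D = diag(ε)`. In block form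
`A = [[2, 0], [C, 1]]`, `D = diag(D₁, D₂)`, this is `U = [[D₁, 0], [(C D₁ - D₂ C) / 2, D₂]]`,
whose lower-left entries `C i j * (ε j - ε i) / 2` are integers because two signs differ by an
even number. Being block lower triangular with diagonal `D`, `U` has determinant `±1`.
-/

lemma Int.two_dvd_units_sub (u v : ℤˣ) : 2 ∣ (u : ℤ) - v := by
  rcases Int.units_eq_one_or u with rfl | rfl <;> rcases Int.units_eq_one_or v with rfl | rfl <;> decide

section SignFlip

variable {m n : Type*} [Fintype m] [Fintype n] [DecidableEq m] [DecidableEq n]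

def wirthFlip (C : Matrix n m ℤ) (s : m ⊕ n → ℤˣ) : Matrix (m ⊕ n) (m ⊕ n) ℤ :=
  fromBlocks (diagonal fun j => (s (.inl j) : ℤ)) 0
    (of fun i j => C i j * ((s (.inl j) - s (.inr i)) / 2)) (diagonal fun i => (s (.inr i) : ℤ))

lemma isUnit_det_wirthFlip (C : Matrix n m ℤ) (s : m ⊕ n → ℤˣ) :
    IsUnit (wirthFlip C s).det := by
  rw [wirthFlip, det_fromBlocks_zero₁₂, det_diagonal, det_diagonal]
  exact (IsUnit.prod_univ_iff.2 fun j => (s _).isUnit).mul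
    (IsUnit.prod_univ_iff.2 fun i => (s _).isUnit)

lemma wirthFlip_mul (C : Matrix n m ℤ) (s : m ⊕ n → ℤˣ) :
    wirthFlip C s * fromBlocks (2 • 1) 0 C 1 =
      fromBlocks (2 • 1) 0 C 1 * diagonal fun i => (s i : ℤ) := by
  rw [← Sum.elim_comp_inl_inr (fun i => (s i : ℤ)), ← fromBlocks_diagonal, wirthFlip,
    fromBlocks_multiply, fromBlocks_multiply]
  simp only [Matrix.mul_smul, Matrix.smul_mul, Matrix.mul_one, Matrix.one_mul, Matrix.mul_zero,
    Matrix.zero_mul, add_zero, zero_add]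
  congr 1
  ext i j
  have := Int.ediv_mul_cancel (Int.two_dvd_units_sub (s (.inl j)) (s (.inr i)))
  simp only [Matrix.add_apply, Matrix.smul_apply, of_apply, diagonal_mul, mul_diagonal,
    Function.comp_apply]
  linear_combination C i j * this

end SignFlip

lemma IsWirth.exists_submatrix_eq_fromBlocks {d : ℕ} {A : Matrix (Fin d) (Fin d) ℤ}
    (hA : IsWirth A) :
    ∃ (f : ℕ) (e : Fin f ⊕ Fin (d - f) ≃ Fin d) (C : Matrix (Fin (d - f)) (Fin f) ℤ),
      A.submatrix e e = fromBlocks (2 • 1) 0 C 1 := by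
  obtain ⟨f, hfd, h11, h12, -, h22, -⟩ := hA
  let e : Fin f ⊕ Fin (d - f) ≃ Fin d := finSumFinEquiv.trans (finCongr (by omega))
  refine ⟨f, e, (A.submatrix e e).toBlocks₂₁, (fromBlocks_toBlocks _).symm.trans ?_⟩
  congr 1 <;> ext i j <;>
    simp [e, toBlocks₁₁, toBlocks₁₂, toBlocks₂₂, h11, h12, h22, one_apply, Fin.ext_iff]

lemma IsWirth.exists_mul_eq_mul_diagonal {d : ℕ} {A : Matrix (Fin d) (Fin d) ℤ}
    (hA : IsWirth A) (s : Fin d → ℤˣ) :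
    ∃ U : Matrix (Fin d) (Fin d) ℤ, IsUnit U.det ∧ U * A = A * diagonal fun i => (s i : ℤ) := by
  obtain ⟨f, e, C, hAC⟩ := hA.exists_submatrix_eq_fromBlocks
  refine ⟨reindex e e (wirthFlip C (s ∘ e)), ?_, ?_⟩
  · rw [reindex_apply, det_submatrix_equiv_self]
    exact isUnit_det_wirthFlip _ _
  · apply (reindex e.symm e.symm).injective
    simp only [reindex_apply, Equiv.symm_symm, ← submatrix_mul_equiv _ _ _ e, hAC,
      submatrix_submatrix, Equiv.symm_comp_self, submatrix_id_id, submatrix_diagonal_equiv]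
    exact wirthFlip_mul C (s ∘ e)

lemma applyU_smul_col_of_mul_eq_mul_diagonal {d : ℕ} {U A : Matrix (Fin d) (Fin d) ℤ}
    {s : Fin d → ℤˣ} (h : U * A = A * diagonal fun i => (s i : ℤ)) (j : Fin d) :
    applyU U (((s j : ℤ) : ℝ) • fun i => (A i j : ℝ)) = fun i => (A i j : ℝ) := by
  ext i
  calc ∑ k, (U i k : ℝ) * (((s j : ℤ) : ℝ) * A k j)
      = ((s j * (U * A) i j : ℤ) : ℝ) := by
        simp only [mul_apply, Finset.mul_sum, Int.cast_sum, Int.cast_mul]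
        exact Finset.sum_congr rfl fun k _ => by ring
    _ = ((A i j * (s j * s j : ℤˣ) : ℤ) : ℝ) := by
        rw [h, mul_diagonal, Units.val_mul]; push_cast; ring
    _ = A i j := by rw [Int.units_mul_self]; simp

theorem wirth_facets_isomorphic (d : ℕ) (A : Matrix (Fin d) (Fin d) ℤ)
    (hA : IsWirth A) (ε : Fin d → ℝ) (hε : ∀ j, ε j = 1 ∨ ε j = -1) :
    ∃ U : Matrix (Fin d) (Fin d) ℤ, IsUnit U.det ∧
      ∀ j : Fin d, applyU U (ε j • (fun i => (A i j : ℝ))) = fun i => (A i j : ℝ) := by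
  have hsign : ∀ j, ∃ u : ℤˣ, ((u : ℤ) : ℝ) = ε j := fun j => by
    rcases hε j with h | h
    · exact ⟨1, by simp [h]⟩
    · exact ⟨-1, by simp [h]⟩
  choose s hs using hsign
  obtain ⟨U, hU, hUA⟩ := hA.exists_mul_eq_mul_diagonal s
  exact ⟨U, hU, fun j => by simpa only [hs] using applyU_smul_col_of_mul_eq_mul_diagonal hUA j⟩
end
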